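/- Let (X,T) be a minimal Cantor system and let μ be a T-invariant Borel probability measure. If f ∈ C(X,ℤ) is balanced for (X,T), then ∫ f dμ is an additive continuous eigenvalue of (X,T): there exists a continuous function g : X → ℂ, not identically zero, such that g∘T = exp(2πi ∫ f dμ) · g. -/

import Mathlib

open MeasureTheory Filter

/-- `μ` is a `T`-invariant Borel probability measure. -/
def InvProb {Y : Type*} [MeasurableSpace Y] (T : Y → Y) (μ : Measure Y) : Prop :=
  IsProbabilityMeasure μ ∧ MeasurePreserving T μ μ

/-- A real-valued function is balanced for the dynamical system given by `T`. -/
def IsBalanced {Y : Type*} (T : Y → Y) (f : Y → ℝ) : Prop :=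
  ∃ C : ℝ, 0 < C ∧ ∀ x y : Y, ∀ n : ℕ,
    |∑ i ∈ Finset.range (n + 1), (f (T^[i] x) - f (T^[i] y))| ≤ C


/-!
Integrating the balance inequality in `y` against the invariant measure `μ` shows that the
Birkhoff sums of `φ = ∫ f dμ - f` are bounded along one orbit. By the Gottschalk–Hedlund theorem
`φ` is then a continuous coboundary, `φ = u ∘ T - u`, and since `f` is integer valued,
`g = exp (2πi u)` satisfies `g ∘ T = exp (2πi ∫ f dμ) g`.

Gottschalk–Hedlund is proved with the skew product `(x, t) ↦ (T x, t + φ x)`: the orbit closure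
of `(x₀, 0)` is compact, so it contains a minimal closed invariant set `K`. Vertical translations
commute with the skew product, so minimality forbids two points of `K` in the same fibre (`K` would
be invariant under a downward translation, hence unbounded below), while minimality of `T` makes
`K` project onto `X`. Hence `K` is the graph of the continuous transfer function `u`.
-/

open Set

section ClosedInvariant

variable {Y : Type*} [TopologicalSpace Y]

def IsNonemptyClosedInvariant (S : Y → Y) (K : Set Y) : Prop :=
  K.Nonempty ∧ IsClosed K ∧ MapsTo S K K

theorem IsCompact.exists_minimal_isNonemptyClosedInvariant {S : Y → Y} {K₀ : Set Y}
    (hK₀ : IsCompact K₀) (h₀ : IsNonemptyClosedInvariant S K₀) :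
    ∃ K ⊆ K₀, Minimal (IsNonemptyClosedInvariant S) K := by
  set 𝒞 : Set (Set Y) := {K | IsNonemptyClosedInvariant S K ∧ K ⊆ K₀}
  have chain_bound : ∀ c ⊆ 𝒞, IsChain (· ⊆ ·) c → c.Nonempty → ∃ lb ∈ 𝒞, ∀ K ∈ c, lb ⊆ K := by
    intro c hc hchain ⟨K₁, hK₁⟩
    have : Nonempty c := ⟨⟨K₁, hK₁⟩⟩
    refine ⟨⋂₀ c, ⟨⟨?_, isClosed_sInter fun K hK => (hc hK).1.2.1, ?_⟩,
      (sInter_subset_of_mem hK₁).trans (hc hK₁).2⟩, fun K hK => sInter_subset_of_mem hK⟩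
    · exact IsCompact.nonempty_sInter_of_directed_nonempty_isCompact_isClosed
        (IsChain.directedOn hchain.symm) (fun K hK => (hc hK).1.1)
        (fun K hK => hK₀.of_isClosed_subset (hc hK).1.2.1 (hc hK).2) fun K hK => (hc hK).1.2.1
    · exact fun y hy K hK => (hc hK).1.2.2 (hy K hK)
  obtain ⟨K, hKK₀, hK⟩ := zorn_superset_nonempty 𝒞 chain_bound K₀ ⟨h₀, subset_rfl⟩
  exact ⟨K, hKK₀, hK.prop.1, fun K' hK' hK'K => hK.2 ⟨hK', hK'K.trans hKK₀⟩ hK'K⟩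

end ClosedInvariant

theorem continuous_of_isCompact_graph {X Y : Type*} [TopologicalSpace X] [TopologicalSpace Y]
    [T2Space X] {u : X → Y} (hu : IsCompact {p : X × Y | p.2 = u p.1}) : Continuous u := by
  refine continuous_iff_isClosed.2 fun A hA => ?_
  have : u ⁻¹' A = Prod.fst '' ({p : X × Y | p.2 = u p.1} ∩ Prod.snd ⁻¹' A) := by
    ext x
    constructor
    · exact fun hx => ⟨(x, u x), ⟨rfl, hx⟩, rfl⟩
    · rintro ⟨p, ⟨hp, hpA⟩, rfl⟩
      exact (hp ▸ hpA : u p.1 ∈ A)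
  rw [this]
  exact ((hu.inter_right (hA.preimage continuous_snd)).image continuous_fst).isClosed

section SkewProduct

variable {X : Type*}

def skewProduct (T : X → X) (φ : X → ℝ) (p : X × ℝ) : X × ℝ := (T p.1, p.2 + φ p.1)

theorem skewProduct_iterate (T : X → X) (φ : X → ℝ) (n : ℕ) (x : X) (t : ℝ) :
    (skewProduct T φ)^[n] (x, t) = (T^[n] x, t + birkhoffSum T φ n x) := by
  induction n with
  | zero => simp
  | succ n ih =>
    rw [Function.iterate_succ_apply', ih, Function.iterate_succ_apply', birkhoffSum_succ,
      skewProduct, add_assoc]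

theorem skewProduct_sub_snd (T : X → X) (φ : X → ℝ) (p : X × ℝ) (c : ℝ) :
    skewProduct T φ (p.1, p.2 - c) = ((skewProduct T φ p).1, (skewProduct T φ p).2 - c) := by
  simp only [skewProduct]
  ring_nf

variable [TopologicalSpace X] {T : X → X} {φ : X → ℝ} {K : Set (X × ℝ)}

theorem Minimal.sub_snd_mem_of_add_mem
    (hK : Minimal (IsNonemptyClosedInvariant (skewProduct T φ)) K) {x : X} {t c : ℝ}
    (ht : (x, t) ∈ K) (htc : (x, t + c) ∈ K) {p : X × ℝ} (hp : p ∈ K) : (p.1, p.2 - c) ∈ K := by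
  obtain ⟨-, hKcl, hKinv⟩ := hK.prop
  set K' := {q ∈ K | (q.1, q.2 - c) ∈ K}
  have hK' : IsNonemptyClosedInvariant (skewProduct T φ) K' := by
    refine ⟨⟨(x, t + c), htc, by simpa using ht⟩,
      hKcl.inter (hKcl.preimage (by fun_prop)), fun q ⟨hq, hqc⟩ => ⟨hKinv hq, ?_⟩⟩
    rw [← skewProduct_sub_snd]
    exact hKinv hqc
  exact (hK.2 hK' (sep_subset _ _) hp).2

theorem Minimal.eq_of_mem_skewProduct
    (hK : Minimal (IsNonemptyClosedInvariant (skewProduct T φ)) K)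
    (hbdd : BddBelow (Prod.snd '' K)) {x : X} {t s : ℝ} (ht : (x, t) ∈ K) (hs : (x, s) ∈ K) :
    t = s := by
  suffices key : ∀ a c, 0 < c → (x, a) ∈ K → (x, a + c) ∈ K → False by
    by_contra hne
    rcases lt_or_gt_of_ne hne with h | h
    · exact key t (s - t) (by linarith) ht (by simpa using hs)
    · exact key s (t - s) (by linarith) hs (by simpa using ht)
  intro a c hc ha hac
  have descend : ∀ n : ℕ, (x, a - n * c) ∈ K := by
    intro n
    induction n with
    | zero => simpa using ha
    | succ n ih =>
      convert hK.sub_snd_mem_of_add_mem ha hac ih using 2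
      push_cast
      ring
  obtain ⟨B, hB⟩ := hbdd
  obtain ⟨n, hn⟩ := exists_nat_gt ((a - B) / c)
  have hlow : B ≤ a - n * c := hB ⟨_, descend n, rfl⟩
  have hhigh : a - B < n * c := (div_lt_iff₀ hc).1 hn
  linarith

end SkewProduct

theorem exists_continuous_eq_add_of_bounded_birkhoffSum {X : Type*} [TopologicalSpace X]
    [CompactSpace X] [T2Space X] {T : X → X} (hT : Continuous T)
    (hmin : ∀ F : Set X, IsClosed F → (∀ x ∈ F, T x ∈ F) → F = ∅ ∨ F = univ)
    {φ : X → ℝ} (hφ : Continuous φ) {x₀ : X} {C : ℝ} (hC : ∀ n, |birkhoffSum T φ n x₀| ≤ C) :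
    ∃ u : X → ℝ, Continuous u ∧ ∀ x, u (T x) = u x + φ x := by
  set S := skewProduct T φ
  have hS : Continuous S := by unfold S skewProduct; fun_prop
  set Ω := closure (range fun n => S^[n] (x₀, 0))
  have hΩB : Ω ⊆ univ ×ˢ Icc (-C) C :=
    closure_minimal (range_subset_iff.2 fun n => by
      simpa [S, skewProduct_iterate] using abs_le.1 (hC n)) (isClosed_univ.prod isClosed_Icc)
  have hΩ : IsNonemptyClosedInvariant S Ω := by
    refine ⟨(range_nonempty _).closure, isClosed_closure, MapsTo.closure ?_ hS⟩
    rintro _ ⟨n, rfl⟩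
    exact ⟨n + 1, Function.iterate_succ_apply' S n _⟩
  have hΩc : IsCompact Ω := (isCompact_univ.prod isCompact_Icc).of_isClosed_subset hΩ.2.1 hΩB
  obtain ⟨K, hKΩ, hK⟩ := hΩc.exists_minimal_isNonemptyClosedInvariant hΩ
  obtain ⟨hKne, hKcl, hKinv⟩ := hK.prop
  have hKc : IsCompact K := hΩc.of_isClosed_subset hKcl hKΩ
  have hfst : Prod.fst '' K = univ := by
    refine (hmin _ (hKc.image continuous_fst).isClosed ?_).resolve_left (hKne.image _).ne_empty
    rintro _ ⟨p, hp, rfl⟩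
    exact ⟨S p, hKinv hp, rfl⟩
  have hsection : ∀ x, ∃ t, (x, t) ∈ K := fun x => by
    obtain ⟨p, hp, rfl⟩ := hfst.symm ▸ mem_univ x
    exact ⟨p.2, hp⟩
  choose u hu using hsection
  have hbdd : BddBelow (Prod.snd '' K) :=
    ⟨-C, by rintro _ ⟨p, hp, rfl⟩; exact (hΩB (hKΩ hp)).2.1⟩
  have hgraph : K = {p | p.2 = u p.1} := by
    ext ⟨x, t⟩
    exact ⟨fun ht => (hK.eq_of_mem_skewProduct hbdd (hu x) ht).symm,
      fun h : t = u x => h ▸ hu x⟩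
  refine ⟨u, continuous_of_isCompact_graph (hgraph ▸ hKc), fun x => ?_⟩
  have := hKinv (hu x)
  rw [hgraph] at this
  exact this.symm

theorem integral_birkhoffSum {X : Type*} [MeasurableSpace X] {μ : Measure X} {T : X → X}
    (hT : MeasurePreserving T μ μ) {f : X → ℝ} (hf : Integrable f μ) (n : ℕ) :
    ∫ x, birkhoffSum T f n x ∂μ = n * ∫ x, f x ∂μ := by
  have hcomp : ∀ k, ∫ x, f (T^[k] x) ∂μ = ∫ x, f x ∂μ := fun k => by
    have hk := hT.iterate k
    rw [← integral_map hk.measurable.aemeasurable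
      (by rw [hk.map_eq]; exact hf.aestronglyMeasurable), hk.map_eq]
  simp only [birkhoffSum]
  rw [integral_finsetSum (f := fun k x => f (T^[k] x)) _
    fun k _ => (hT.iterate k).integrable_comp_of_integrable hf]
  simp [hcomp]

theorem abs_mul_integral_sub_birkhoffSum_le {X : Type*} [MeasurableSpace X] {μ : Measure X}
    [IsProbabilityMeasure μ] {T : X → X} (hT : MeasurePreserving T μ μ) {f : X → ℝ}
    (hf : Integrable f μ) {n : ℕ} {x₀ : X} {C : ℝ}
    (hC : ∀ y, |birkhoffSum T f n y - birkhoffSum T f n x₀| ≤ C) :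
    |n * ∫ x, f x ∂μ - birkhoffSum T f n x₀| ≤ C := by
  have hB : Integrable (birkhoffSum T f n) μ :=
    integrable_finsetSum _ fun k _ => (hT.iterate k).integrable_comp_of_integrable hf
  have : n * ∫ x, f x ∂μ - birkhoffSum T f n x₀ =
      ∫ y, (birkhoffSum T f n y - birkhoffSum T f n x₀) ∂μ := by
    rw [integral_sub hB (integrable_const _), integral_birkhoffSum hT hf, integral_const]
    simp
  rw [this]
  simpa using norm_integral_le_of_norm_le_const (μ := μ)
    (Eventually.of_forall fun y => (Real.norm_eq_abs _).trans_le (hC y))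

theorem IsBalanced.exists_abs_birkhoffSum_sub_le {Y : Type*} {T : Y → Y} {f : Y → ℝ}
    (hf : IsBalanced T f) :
    ∃ C, ∀ n x y, |birkhoffSum T f n x - birkhoffSum T f n y| ≤ C := by
  obtain ⟨C, hC0, hC⟩ := hf
  refine ⟨C, fun n x y => ?_⟩
  rcases n with _ | n
  · simpa using hC0.le
  · simpa [birkhoffSum, Finset.sum_sub_distrib] using hC x y n

theorem exists_eigenfunction_of_eq_add_sub {X : Type*} [TopologicalSpace X] [Nonempty X]
    {T : X → X} {u : X → ℝ} (hu : Continuous u) {α : ℝ} {f : X → ℤ}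
    (huT : ∀ x, u (T x) = u x + (α - f x)) :
    ∃ g : C(X, ℂ), g ≠ 0 ∧ ∀ x,
      g (T x) = Complex.exp (2 * (Real.pi : ℂ) * Complex.I * (α : ℂ)) * g x := by
  refine ⟨⟨fun x => Complex.exp (2 * Real.pi * Complex.I * u x), by fun_prop⟩, fun h => ?_,
    fun x => ?_⟩
  · obtain ⟨x⟩ := ‹Nonempty X›
    exact Complex.exp_ne_zero _ (DFunLike.congr_fun h x)
  · have : 2 * Real.pi * Complex.I * (u (T x) : ℂ) =
        2 * Real.pi * Complex.I * α + 2 * Real.pi * Complex.I * u x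
          + (-f x : ℤ) * (2 * Real.pi * Complex.I) := by
      rw [huT]
      push_cast
      ring
    simp only [ContinuousMap.coe_mk]
    rw [this, Complex.exp_add, Complex.exp_int_mul_two_pi_mul_I, mul_one, Complex.exp_add]

theorem stmt15_general {X : Type*} [TopologicalSpace X] [CompactSpace X] [TopologicalSpace.MetrizableSpace X]
    [MeasurableSpace X] [BorelSpace X]
    (T : X ≃ₜ X)
    (hmin : ∀ F : Set X, IsClosed F → (∀ x ∈ F, T x ∈ F) → F = ∅ ∨ F = Set.univ)
    (μ : Measure X) (hμ : InvProb (⇑T) μ)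
    (f : C(X, ℤ)) (hbal : IsBalanced (⇑T) (fun x => (f x : ℝ))) :
    ∃ g : C(X, ℂ), g ≠ 0 ∧ ∀ x : X,
      g (T x) = Complex.exp (2 * (Real.pi : ℂ) * Complex.I * ((∫ x, (f x : ℝ) ∂μ : ℝ) : ℂ)) * g x := by
  obtain ⟨hprob, hT⟩ := hμ
  have hX : Nonempty X := nonempty_of_isProbabilityMeasure μ
  obtain ⟨x₀⟩ := id hX
  obtain ⟨C, hC⟩ := hbal.exists_abs_birkhoffSum_sub_le
  have hfc : Continuous fun x => (f x : ℝ) := by fun_prop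
  have hfi : Integrable (fun x => (f x : ℝ)) μ :=
    hfc.integrable_of_hasCompactSupport (HasCompactSupport.of_compactSpace _)
  set α := ∫ x, (f x : ℝ) ∂μ
  have hbound : ∀ n, |birkhoffSum T (fun x => α - f x) n x₀| ≤ C := fun n => by
    simpa [birkhoffSum, Finset.sum_sub_distrib] using
      abs_mul_integral_sub_birkhoffSum_le hT hfi fun y => hC n y x₀
  obtain ⟨u, hu, huT⟩ :=
    exists_continuous_eq_add_of_bounded_birkhoffSum T.continuous hmin (by fun_prop) hbound
  exact exists_eigenfunction_of_eq_add_sub hu huT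

theorem stmt15 {X : Type*} [TopologicalSpace X] [CompactSpace X] [TopologicalSpace.MetrizableSpace X]
    [TotallyDisconnectedSpace X] [MeasurableSpace X] [BorelSpace X]
    (hni : ∀ x : X, ¬IsOpen ({x} : Set X))
    (T : X ≃ₜ X)
    (hmin : ∀ F : Set X, IsClosed F → (∀ x ∈ F, T x ∈ F) → F = ∅ ∨ F = Set.univ)
    (μ : Measure X) (hμ : InvProb (⇑T) μ)
    (f : C(X, ℤ)) (hbal : IsBalanced (⇑T) (fun x => (f x : ℝ))) :
    ∃ g : C(X, ℂ), g ≠ 0 ∧ ∀ x : X,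
      g (T x) = Complex.exp (2 * (Real.pi : ℂ) * Complex.I * ((∫ x, (f x : ℝ) ∂μ : ℝ) : ℂ)) * g x :=
  stmt15_general T hmin μ hμ f hbal
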